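/- For Gessel's walk, i.e., p_{1,0} = p_{1,1} = p_{-1,0} = p_{-1,-1} = 1/4 and all other p_{i,j} = 0, the drift is zero, the correlation coefficient R = (Σ_{i,j} ij·p_{i,j})/(√(Σ_{i,j} i²·p_{i,j})·√(Σ_{i,j} j²·p_{i,j})) equals 1/√2, the angle θ = arccos(−R) equals 3π/4, and the group of the walk W is finite of order 8. -/

import Mathlib

open Polynomial

/-- The kernel `K(x,y) = xy(Σ_{-1≤i,j≤1} p_{i,j} x^i y^j - 1)` as an element of `ℂ[x,y]`
(written with nonnegative exponents `i+1, j+1 ∈ {0,1,2}`). -/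
noncomputable def kernelK (p : ℤ → ℤ → ℝ) : MvPolynomial (Fin 2) ℂ :=
  (∑ i ∈ Finset.Icc (-1 : ℤ) 1, ∑ j ∈ Finset.Icc (-1 : ℤ) 1,
      MvPolynomial.C (p i j : ℂ) * MvPolynomial.X 0 ^ (i + 1).toNat *
        MvPolynomial.X 1 ^ (j + 1).toNat)
    - MvPolynomial.X 0 * MvPolynomial.X 1

/-- `a(x) = p_{1,1} x² + p_{0,1} x + p_{-1,1}` as a polynomial over `ℂ`. -/
noncomputable def polyA (p : ℤ → ℤ → ℝ) : Polynomial ℂ :=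
  C (p 1 1 : ℂ) * X ^ 2 + C (p 0 1 : ℂ) * X + C (p (-1) 1 : ℂ)

/-- `c(x) = p_{1,-1} x² + p_{0,-1} x + p_{-1,-1}` as a polynomial over `ℂ`. -/
noncomputable def polyC (p : ℤ → ℤ → ℝ) : Polynomial ℂ :=
  C (p 1 (-1) : ℂ) * X ^ 2 + C (p 0 (-1) : ℂ) * X + C (p (-1) (-1) : ℂ)

/-- `ã(y) = p_{1,1} y² + p_{1,0} y + p_{1,-1}` as a polynomial over `ℂ`. -/
noncomputable def polyAt (p : ℤ → ℤ → ℝ) : Polynomial ℂ :=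
  C (p 1 1 : ℂ) * X ^ 2 + C (p 1 0 : ℂ) * X + C (p 1 (-1) : ℂ)

/-- `c̃(y) = p_{-1,1} y² + p_{-1,0} y + p_{-1,-1}` as a polynomial over `ℂ`. -/
noncomputable def polyCt (p : ℤ → ℤ → ℝ) : Polynomial ℂ :=
  C (p (-1) 1 : ℂ) * X ^ 2 + C (p (-1) 0 : ℂ) * X + C (p (-1) (-1) : ℂ)

/-- The quotient ring `ℂ[x,y]/(K)`. -/
abbrev QuotK (p : ℤ → ℤ → ℝ) : Type :=
  MvPolynomial (Fin 2) ℂ ⧸ Ideal.span {kernelK p}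

/-- The image `x̄` of `x` in a fraction field `F` of `ℂ[x,y]/(K)`. -/
noncomputable def xbar (p : ℤ → ℤ → ℝ) (F : Type*) [Field F] [Algebra (QuotK p) F] : F :=
  algebraMap (QuotK p) F (Ideal.Quotient.mk (Ideal.span {kernelK p}) (MvPolynomial.X 0))

/-- The image `ȳ` of `y` in a fraction field `F` of `ℂ[x,y]/(K)`. -/
noncomputable def ybar (p : ℤ → ℤ → ℝ) (F : Type*) [Field F] [Algebra (QuotK p) F] : F :=
  algebraMap (QuotK p) F (Ideal.Quotient.mk (Ideal.span {kernelK p}) (MvPolynomial.X 1))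

/-- The correlation coefficient `R` of the walk. -/
noncomputable def corrR (p : ℤ → ℤ → ℝ) : ℝ :=
  (∑ i ∈ Finset.Icc (-1 : ℤ) 1, ∑ j ∈ Finset.Icc (-1 : ℤ) 1, (i : ℝ) * (j : ℝ) * p i j) /
    (Real.sqrt (∑ i ∈ Finset.Icc (-1 : ℤ) 1, ∑ j ∈ Finset.Icc (-1 : ℤ) 1, (i : ℝ) ^ 2 * p i j) *
     Real.sqrt (∑ i ∈ Finset.Icc (-1 : ℤ) 1, ∑ j ∈ Finset.Icc (-1 : ℤ) 1, (j : ℝ) ^ 2 * p i j))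

/-- The angle `θ = arccos(-R)`. -/
noncomputable def theta (p : ℤ → ℤ → ℝ) : ℝ := Real.arccos (-(corrR p))

/-- The jump probabilities of Gessel's walk:
`p_{1,0} = p_{1,1} = p_{-1,0} = p_{-1,-1} = 1/4`, all others `0`. -/
noncomputable def gessel : ℤ → ℤ → ℝ := fun i j =>
  if (i = 1 ∧ j = 0) ∨ (i = 1 ∧ j = 1) ∨ (i = -1 ∧ j = 0) ∨ (i = -1 ∧ j = -1) then 1 / 4 else 0


/-!
For Gessel's walk `a(x) = x²/4`, `c(x) = 1/4`, `ã(y) = (y² + y)/4` and `c̃(y) = (y + 1)/4`, so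
`ξ` and `η` act on the function field of the kernel curve as `(x, y) ↦ (x, 1/(x²y))` and
`(x, y) ↦ (1/(xy), y)`. Both are involutions, and `(ξη)²` is `(x, y) ↦ (1/x, 1/y)`, which is not
the identity because `x̄² ≠ 1`; hence `ξη` has order `4`. Two involutions whose product has order
`n ≥ 3` generate a dihedral group of order `2n`.

Inequalities such as `x̄ ≠ 0` hold in `F` because the polynomial in question does not vanish at
the point `(-3/2, -4)` of the curve `K = 0`.
-/

section Dihedral

variable {G : Type*} [Group G] {n : ℕ} {a c : G}

lemma pow_zmod_val_natCast (hc : c ^ n = 1) (k : ℕ) : c ^ (k : ZMod n).val = c ^ k := by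
  rw [ZMod.val_natCast, ← pow_eq_pow_mod k hc]

lemma pow_zmod_val_add [NeZero n] (hc : c ^ n = 1) (i j : ZMod n) :
    c ^ (i + j).val = c ^ i.val * c ^ j.val := by
  rw [← ZMod.natCast_zmod_val i, ← ZMod.natCast_zmod_val j, ← Nat.cast_add,
    pow_zmod_val_natCast hc, pow_zmod_val_natCast hc, pow_zmod_val_natCast hc, pow_add]

lemma pow_zmod_val_sub [NeZero n] (hc : c ^ n = 1) (i j : ZMod n) :
    c ^ (j - i).val = c ^ j.val * (c ^ i.val)⁻¹ :=
  eq_mul_inv_of_mul_eq (by rw [← pow_zmod_val_add hc, sub_add_cancel])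

def DihedralGroup.lift [NeZero n] (hc : c ^ n = 1) (ha : a ^ 2 = 1) (hac : a * c * a⁻¹ = c⁻¹) :
    DihedralGroup n →* G where
  toFun
    | .r i => c ^ i.val
    | .sr i => a * c ^ i.val
  map_one' := by
    show c ^ (0 : ZMod n).val = 1
    rw [ZMod.val_zero, pow_zero]
  map_mul' := by
    have haa : a * a = 1 := by rw [← sq, ha]
    have hswap (k : ℕ) : c ^ k * a = a * (c ^ k)⁻¹ := by
      have : a * c ^ k * a⁻¹ = (c ^ k)⁻¹ := by rw [← conj_pow, hac, inv_pow]
      rw [← this, inv_eq_of_mul_eq_one_right haa, ← mul_assoc, ← mul_assoc, haa, one_mul]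
    have hcomm (k l : ℕ) : c ^ k * (c ^ l)⁻¹ = (c ^ l)⁻¹ * c ^ k :=
      ((Commute.refl c).pow_pow k l).inv_right
    rintro (i | i) (j | j) <;>
      simp only [DihedralGroup.r_mul_r, DihedralGroup.r_mul_sr, DihedralGroup.sr_mul_r,
        DihedralGroup.sr_mul_sr, pow_zmod_val_add hc, pow_zmod_val_sub hc, ← mul_assoc]
    · rw [hswap, mul_assoc, mul_assoc, hcomm]
    · rw [hcomm, mul_assoc a, hswap, ← mul_assoc, haa, one_mul]

@[simp]
lemma DihedralGroup.lift_r [NeZero n] (hc : c ^ n = 1) (ha : a ^ 2 = 1) (hac : a * c * a⁻¹ = c⁻¹)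
    (i : ZMod n) : DihedralGroup.lift hc ha hac (.r i) = c ^ i.val :=
  rfl

@[simp]
lemma DihedralGroup.lift_sr [NeZero n] (hc : c ^ n = 1) (ha : a ^ 2 = 1) (hac : a * c * a⁻¹ = c⁻¹)
    (i : ZMod n) : DihedralGroup.lift hc ha hac (.sr i) = a * c ^ i.val :=
  rfl

lemma DihedralGroup.lift_injective [NeZero n] (hc : c ^ n = 1) (ha : a ^ 2 = 1)
    (hac : a * c * a⁻¹ = c⁻¹) (hn : orderOf c = n) (hc2 : c ^ 2 ≠ 1) :
    Function.Injective (DihedralGroup.lift hc ha hac) := by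
  refine (injective_iff_map_eq_one _).mpr ?_
  rintro (i | i) h <;> simp only [DihedralGroup.lift_r, DihedralGroup.lift_sr] at h
  · have hdvd : orderOf c ∣ i.val := orderOf_dvd_of_pow_eq_one h
    rw [hn] at hdvd
    rw [Nat.eq_zero_of_dvd_of_lt hdvd (ZMod.val_lt i) |> (ZMod.val_eq_zero i).mp,
      DihedralGroup.r_zero]
  · have ha' : a = (c ^ i.val)⁻¹ := eq_inv_of_mul_eq_one_left h
    have hcomm : a * c * a⁻¹ = c := by
      rw [ha', inv_inv, ((Commute.refl c).pow_left i.val).inv_left.eq, inv_mul_cancel_right]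
    exact absurd (by rw [sq, ← mul_eq_one_iff_eq_inv.mpr (hcomm.symm.trans hac)]) hc2

theorem Subgroup.nat_card_closure_pair_of_sq_eq_one {a b : G} (ha : a ^ 2 = 1) (hb : b ^ 2 = 1)
    (hab : 2 < orderOf (a * b)) :
    Nat.card (Subgroup.closure {a, b}) = 2 * orderOf (a * b) := by
  have : NeZero (orderOf (a * b)) := ⟨by omega⟩
  have hb' : b⁻¹ = b := inv_eq_of_mul_eq_one_right (by rw [← sq, hb])
  have hconj : a * (a * b) * a⁻¹ = (a * b)⁻¹ := by
    rw [mul_inv_rev, hb', ← mul_assoc, ← sq, ha, one_mul]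
  set φ := DihedralGroup.lift (pow_orderOf_eq_one (a * b)) ha hconj
  have hrange : φ.range = Subgroup.closure {a, b} := by
    have haG : a ∈ Subgroup.closure {a, b} := Subgroup.subset_closure (by simp)
    have hbG : b ∈ Subgroup.closure {a, b} := Subgroup.subset_closure (by simp)
    refine le_antisymm ?_ ((Subgroup.closure_le _).mpr ?_)
    · rintro _ ⟨i | i, rfl⟩
      · exact pow_mem (mul_mem haG hbG) _
      · exact mul_mem haG (pow_mem (mul_mem haG hbG) _)
    · rintro _ (rfl | rfl)
      · exact ⟨.sr 0, by rw [DihedralGroup.lift_sr, ZMod.val_zero, pow_zero, mul_one]⟩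
      · refine ⟨.sr 1, ?_⟩
        rw [DihedralGroup.lift_sr, ← Nat.cast_one, pow_zmod_val_natCast (pow_orderOf_eq_one _),
          pow_one, ← mul_assoc, ← sq, ha, one_mul]
  have hinj : Function.Injective φ :=
    DihedralGroup.lift_injective _ ha hconj rfl
      (fun h => absurd (orderOf_le_of_pow_eq_one two_pos h) (by omega))
  rw [← hrange, ← Nat.card_congr (MonoidHom.ofInjective hinj).toEquiv, DihedralGroup.nat_card]

end Dihedral

lemma Finset.sum_Icc_neg_one_one {M : Type*} [AddCommMonoid M] (f : ℤ → M) :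
    ∑ i ∈ Finset.Icc (-1 : ℤ) 1, f i = f (-1) + f 0 + f 1 := by
  rw [show Finset.Icc (-1 : ℤ) 1 = {-1, 0, 1} by decide, Finset.sum_insert (by decide),
    Finset.sum_insert (by decide), Finset.sum_singleton, add_assoc]

lemma gessel_drift_x :
    ∑ i ∈ Finset.Icc (-1 : ℤ) 1, ∑ j ∈ Finset.Icc (-1 : ℤ) 1, (i : ℝ) * gessel i j = 0 := by
  norm_num [Finset.sum_Icc_neg_one_one, gessel]

lemma gessel_drift_y :
    ∑ i ∈ Finset.Icc (-1 : ℤ) 1, ∑ j ∈ Finset.Icc (-1 : ℤ) 1, (j : ℝ) * gessel i j = 0 := by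
  norm_num [Finset.sum_Icc_neg_one_one, gessel]

lemma one_div_sqrt_two : 1 / Real.sqrt 2 = Real.sqrt 2 / 2 := by
  field_simp
  norm_num

lemma corrR_gessel : corrR gessel = 1 / Real.sqrt 2 := by
  norm_num [corrR, Finset.sum_Icc_neg_one_one, gessel]
  rw [← one_div, one_div_sqrt_two]
  ring

lemma theta_gessel : theta gessel = 3 * Real.pi / 4 := by
  rw [theta, corrR_gessel, Real.arccos_neg, one_div_sqrt_two, ← Real.cos_pi_div_four,
    Real.arccos_cos (by positivity) (by linarith [Real.pi_pos])]
  ring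

lemma polyA_gessel : polyA gessel = C (1 / 4) * X ^ 2 := by
  norm_num [polyA, gessel]

lemma polyC_gessel : polyC gessel = C (1 / 4) := by
  norm_num [polyC, gessel]

lemma polyAt_gessel : polyAt gessel = C (1 / 4) * (X ^ 2 + X) := by
  norm_num [polyAt, gessel]
  ring

lemma polyCt_gessel : polyCt gessel = C (1 / 4) * (X + 1) := by
  norm_num [polyCt, gessel]
  ring

lemma aeval_polyC_div_aeval_polyA_gessel {K : Type*} [Field K] [Algebra ℂ K] (x y : K) :
    aeval x (polyC gessel) / (aeval x (polyA gessel) * y) = (x ^ 2 * y)⁻¹ := by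
  rw [polyC_gessel, polyA_gessel, map_mul, aeval_C, mul_assoc, div_mul_cancel_left₀ (by simp),
    aeval_X_pow]

lemma aeval_polyCt_div_aeval_polyAt_gessel {K : Type*} [Field K] [Algebra ℂ K] {x y : K}
    (hy : y + 1 ≠ 0) :
    aeval y (polyCt gessel) / (aeval y (polyAt gessel) * x) = (x * y)⁻¹ := by
  rw [polyCt_gessel, polyAt_gessel, map_mul, map_mul, aeval_C,
    show aeval y (X ^ 2 + X : ℂ[X]) = aeval y (X + 1 : ℂ[X]) * y by simp; ring,
    mul_assoc, mul_assoc, ← mul_assoc (algebraMap ℂ K _), div_mul_cancel_left₀ (by simp [hy]),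
    mul_comm]

lemma eval_kernelK_gessel : MvPolynomial.eval ![-3 / 2, -4] (kernelK gessel) = 0 := by
  norm_num [kernelK, Finset.sum_Icc_neg_one_one, gessel, show (2 : ℤ).toNat = 2 from rfl]

section KernelCurve

variable {p : ℤ → ℤ → ℝ} {F : Type*} [Field F] [Algebra ℂ F] [Algebra (QuotK p) F]
  [IsScalarTower ℂ (QuotK p) F]

variable (p F) in
noncomputable def curveMap : MvPolynomial (Fin 2) ℂ →ₐ[ℂ] F :=
  (IsScalarTower.toAlgHom ℂ (QuotK p) F).comp (Ideal.Quotient.mkₐ ℂ _)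

lemma curveMap_X_zero : curveMap p F (MvPolynomial.X 0) = xbar p F := rfl

lemma curveMap_X_one : curveMap p F (MvPolynomial.X 1) = ybar p F := rfl

variable [IsFractionRing (QuotK p) F]

lemma curveMap_ne_zero {g : MvPolynomial (Fin 2) ℂ} {z : Fin 2 → ℂ}
    (hK : MvPolynomial.eval z (kernelK p) = 0) (hg : MvPolynomial.eval z g ≠ 0) :
    curveMap p F g ≠ 0 := by
  intro h
  obtain ⟨f, rfl⟩ : kernelK p ∣ g := by
    rw [← Ideal.mem_span_singleton, ← Ideal.Quotient.eq_zero_iff_mem]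
    exact (IsFractionRing.injective (QuotK p) F).eq_iff.mp (h.trans (map_zero _).symm)
  exact hg (by rw [map_mul, hK, zero_mul])

lemma algEquiv_ext_of_xbar_ybar {φ ψ : F ≃ₐ[ℂ] F}
    (hx : φ (xbar p F) = ψ (xbar p F)) (hy : φ (ybar p F) = ψ (ybar p F)) : φ = ψ := by
  have hcomp : (φ : F →ₐ[ℂ] F).comp (curveMap p F) = (ψ : F →ₐ[ℂ] F).comp (curveMap p F) := by
    refine MvPolynomial.algHom_ext fun i => ?_
    fin_cases i
    exacts [hx, hy]
  have hring : (φ : F →+* F) = ψ :=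
    IsLocalization.ringHom_ext (nonZeroDivisors (QuotK p)) <| RingHom.ext fun q => by
      obtain ⟨g, rfl⟩ := Ideal.Quotient.mk_surjective q
      exact DFunLike.congr_fun hcomp g
  exact AlgEquiv.ext fun z => DFunLike.congr_fun hring z

end KernelCurve

section GesselGroup

variable {F : Type*} [Field F] [Algebra ℂ F] [Algebra (QuotK gessel) F]
  [IsScalarTower ℂ (QuotK gessel) F] [IsFractionRing (QuotK gessel) F]

lemma curveMap_gessel_ne_zero {g : MvPolynomial (Fin 2) ℂ}
    (hg : MvPolynomial.eval ![-3 / 2, -4] g ≠ 0) : curveMap gessel F g ≠ 0 :=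
  curveMap_ne_zero eval_kernelK_gessel hg

lemma xbar_gessel_ne_zero : xbar gessel F ≠ 0 :=
  curveMap_gessel_ne_zero (g := .X 0) (by norm_num)

lemma ybar_gessel_ne_zero : ybar gessel F ≠ 0 :=
  curveMap_gessel_ne_zero (g := .X 1) (by norm_num)

lemma ybar_gessel_add_one_ne_zero : ybar gessel F + 1 ≠ 0 := by
  have h := curveMap_gessel_ne_zero (F := F) (g := .X 1 + 1) (by norm_num)
  rwa [map_add, map_one, curveMap_X_one] at h

lemma xbar_gessel_sq_ne_one : xbar gessel F ^ 2 ≠ 1 := by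
  have h := curveMap_gessel_ne_zero (F := F) (g := .X 0 ^ 2 - 1) (by norm_num)
  rwa [map_sub, map_pow, map_one, curveMap_X_zero, sub_ne_zero] at h

variable {ξ η : F ≃ₐ[ℂ] F}

lemma gessel_xi_sq_eq_one (hξx : ξ (xbar gessel F) = xbar gessel F)
    (hξy : ξ (ybar gessel F) = (xbar gessel F ^ 2 * ybar gessel F)⁻¹) : ξ ^ 2 = 1 := by
  have hx := xbar_gessel_ne_zero (F := F)
  refine algEquiv_ext_of_xbar_ybar (p := gessel) ?_ ?_ <;>
    simp only [sq, AlgEquiv.mul_apply, AlgEquiv.one_apply, map_inv₀, map_mul, hξx, hξy]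
  field_simp

lemma gessel_eta_sq_eq_one (hηy : η (ybar gessel F) = ybar gessel F)
    (hηx : η (xbar gessel F) = (xbar gessel F * ybar gessel F)⁻¹) : η ^ 2 = 1 := by
  have hy := ybar_gessel_ne_zero (F := F)
  refine algEquiv_ext_of_xbar_ybar (p := gessel) ?_ ?_ <;>
    simp only [sq, AlgEquiv.mul_apply, AlgEquiv.one_apply, map_inv₀, map_mul, hηx, hηy]
  field_simp

lemma orderOf_gessel_xi_mul_eta (hξx : ξ (xbar gessel F) = xbar gessel F)
    (hξy : ξ (ybar gessel F) = (xbar gessel F ^ 2 * ybar gessel F)⁻¹)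
    (hηy : η (ybar gessel F) = ybar gessel F)
    (hηx : η (xbar gessel F) = (xbar gessel F * ybar gessel F)⁻¹) :
    orderOf (ξ * η) = 4 := by
  have hx0 := xbar_gessel_ne_zero (F := F)
  have hy0 := ybar_gessel_ne_zero (F := F)
  have hx : ((ξ * η) ^ 2) (xbar gessel F) = (xbar gessel F)⁻¹ := by
    simp only [sq, AlgEquiv.mul_apply, map_inv₀, map_mul, hξx, hξy, hηx, hηy]
    field_simp
  have hy : ((ξ * η) ^ 2) (ybar gessel F) = (ybar gessel F)⁻¹ := by
    simp only [sq, AlgEquiv.mul_apply, map_inv₀, map_mul, hξx, hξy, hηx, hηy]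
    field_simp
  refine orderOf_eq_prime_pow (p := 2) (n := 1) (fun h => xbar_gessel_sq_ne_one (F := F) ?_) ?_
  · rw [pow_one] at h
    rw [h, AlgEquiv.one_apply] at hx
    rw [sq, ← mul_inv_cancel₀ hx0, ← hx]
  · rw [show 2 ^ (1 + 1) = 2 * 2 by rfl, pow_mul]
    refine algEquiv_ext_of_xbar_ybar (p := gessel) ?_ ?_
    · rw [sq ((ξ * η) ^ 2), AlgEquiv.mul_apply, hx, map_inv₀, hx, inv_inv, AlgEquiv.one_apply]
    · rw [sq ((ξ * η) ^ 2), AlgEquiv.mul_apply, hy, map_inv₀, hy, inv_inv, AlgEquiv.one_apply]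

end GesselGroup

/-- Gessel's walk has zero drift, correlation coefficient `R = 1/√2`,
angle `θ = 3π/4`, and its group `W = ⟨ξ, η⟩` is finite of order `8`. -/
theorem gessel_group_order_eight
    (F : Type) [Field F] [Algebra ℂ F] [Algebra (QuotK gessel) F]
    [IsScalarTower ℂ (QuotK gessel) F] [IsFractionRing (QuotK gessel) F]
    (ξ η : F ≃ₐ[ℂ] F)
    (hξx : ξ (xbar gessel F) = xbar gessel F)
    (hξy : ξ (ybar gessel F) =
      Polynomial.aeval (xbar gessel F) (polyC gessel) /
        (Polynomial.aeval (xbar gessel F) (polyA gessel) * ybar gessel F))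
    (hηy : η (ybar gessel F) = ybar gessel F)
    (hηx : η (xbar gessel F) =
      Polynomial.aeval (ybar gessel F) (polyCt gessel) /
        (Polynomial.aeval (ybar gessel F) (polyAt gessel) * xbar gessel F)) :
    (∑ i ∈ Finset.Icc (-1 : ℤ) 1, ∑ j ∈ Finset.Icc (-1 : ℤ) 1, (i : ℝ) * gessel i j = 0) ∧
    (∑ i ∈ Finset.Icc (-1 : ℤ) 1, ∑ j ∈ Finset.Icc (-1 : ℤ) 1, (j : ℝ) * gessel i j = 0) ∧
    corrR gessel = 1 / Real.sqrt 2 ∧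
    theta gessel = 3 * Real.pi / 4 ∧
    ((Subgroup.closure {ξ, η} : Subgroup (F ≃ₐ[ℂ] F)) : Set (F ≃ₐ[ℂ] F)).Finite ∧
    Nat.card ↥(Subgroup.closure {ξ, η} : Subgroup (F ≃ₐ[ℂ] F)) = 8 := by
  rw [aeval_polyC_div_aeval_polyA_gessel] at hξy
  rw [aeval_polyCt_div_aeval_polyAt_gessel ybar_gessel_add_one_ne_zero] at hηx
  have hord := orderOf_gessel_xi_mul_eta hξx hξy hηy hηx
  have hcard : Nat.card (Subgroup.closure {ξ, η}) = 8 := by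
    rw [Subgroup.nat_card_closure_pair_of_sq_eq_one (gessel_xi_sq_eq_one hξx hξy)
      (gessel_eta_sq_eq_one hηy hηx) (by omega), hord]
  have : Finite (Subgroup.closure {ξ, η}) := Nat.finite_of_card_ne_zero (by omega)
  exact ⟨gessel_drift_x, gessel_drift_y, corrR_gessel, theta_gessel, Set.toFinite _, hcard⟩
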